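/- Let f be the Rastrigin function on ℝⁿ with parameters a_j, ξ_j > 0, and let σ > 0 satisfy σ² > (2/ξ_j²)·log(a_j ξ_j²/2) for every j = 1,…,n. Then the map θ ∈ ℝⁿ ↦ ∫_{ℝⁿ} f dN(θ, σ²I) is strictly convex. -/

import Mathlib

/-!
The Gaussian density factorizes over the coordinates and the Rastrigin function is a sum of
functions of one coordinate each, so the relaxation is the separable function
`θ ↦ ∑ j, (θ_j ^ 2 + σ ^ 2 - a_j e^{-σ²ξ_j²/2} cos (ξ_j θ_j))`; the damping factor is the real part
of the characteristic function of `N(θ_j, σ²)`. The second derivative of the `j`-th summand is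
`2 + a_j ξ_j² e^{-σ²ξ_j²/2} cos (ξ_j θ_j)`, and the hypothesis on `σ` gives
`|a_j| ξ_j² e^{-σ²ξ_j²/2} < 2`, so every summand is strictly convex, hence so is their sum.
-/

open MeasureTheory ProbabilityTheory Real Set
open scoped NNReal

section Gaussian

variable {μ : ℝ} {v : ℝ≥0}

lemma integrable_cos_const_mul {ν : Measure ℝ} [IsFiniteMeasure ν] (c : ℝ) :
    Integrable (fun x => cos (c * x)) ν :=
  .of_bound (by fun_prop) 1 (.of_forall fun _ => abs_cos_le_one _)

lemma integrable_sq_gaussianReal : Integrable (fun x => x ^ 2) (gaussianReal μ v) :=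
  (memLp_id_gaussianReal 2).integrable_sq

lemma integral_sq_gaussianReal : ∫ x, x ^ 2 ∂gaussianReal μ v = μ ^ 2 + v := by
  have h := variance_eq_sub (memLp_id_gaussianReal 2 : MemLp id 2 (gaussianReal μ v))
  simp only [variance_id_gaussianReal, Pi.pow_apply, id, integral_id_gaussianReal] at h
  linarith

lemma integral_cos_mul_gaussianReal (c : ℝ) :
    ∫ x, cos (c * x) ∂gaussianReal μ v = exp (-(v * c ^ 2 / 2)) * cos (c * μ) := by
  have hchar := congrArg RCLike.re (charFun_gaussianReal (μ := μ) (v := v) c)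
  have hint : Integrable (fun x : ℝ => Complex.exp (c * x * Complex.I)) (gaussianReal μ v) :=
    .of_bound (by fun_prop) 1 (.of_forall fun x => by
      rw [← Complex.ofReal_mul, Complex.norm_exp_ofReal_mul_I])
  rw [charFun_apply_real, ← integral_re hint] at hchar
  simpa [← Complex.ofReal_mul, ← Complex.ofReal_pow, Complex.exp_re, sub_eq_add_neg] using hchar

lemma integral_sq_sub_mul_cos_gaussianReal (a c : ℝ) :
    ∫ x, (x ^ 2 - a * cos (c * x)) ∂gaussianReal μ v =
      μ ^ 2 + v - a * exp (-(v * c ^ 2 / 2)) * cos (c * μ) := by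
  rw [integral_sub integrable_sq_gaussianReal ((integrable_cos_const_mul c).const_mul a),
    integral_const_mul, integral_sq_gaussianReal, integral_cos_mul_gaussianReal]
  ring

lemma integral_mul_gaussianPDFReal (hv : v ≠ 0) (g : ℝ → ℝ) :
    ∫ x, g x * gaussianPDFReal μ v x = ∫ x, g x ∂gaussianReal μ v := by
  simp_rw [integral_gaussianReal_eq_integral_smul hv, smul_eq_mul, mul_comm]

lemma integrable_mul_gaussianPDFReal (hv : v ≠ 0) {g : ℝ → ℝ}
    (hg : Integrable g (gaussianReal μ v)) :
    Integrable (fun x => g x * gaussianPDFReal μ v x) := by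
  rw [gaussianReal_of_var_ne_zero _ hv, gaussianPDF_def, integrable_withDensity_iff_integrable_smul'
    (by fun_prop) (.of_forall fun _ => ENNReal.ofReal_lt_top)] at hg
  simpa [ENNReal.toReal_ofReal (gaussianPDFReal_nonneg _ _ _), mul_comm] using hg

end Gaussian

lemma gaussian_density_eq_prod {ι : Type*} [Fintype ι] (v : ℝ≥0) (θ y : EuclideanSpace ℝ ι) :
    (2 * π * v) ^ (-(Fintype.card ι : ℝ) / 2) * exp (-‖y - θ‖ ^ 2 / (2 * v)) =
      ∏ k, gaussianPDFReal (θ k) v (y k) := by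
  have hvar : (0 : ℝ) ≤ 2 * π * v := by positivity
  have hconst : (2 * π * v) ^ (-(Fintype.card ι : ℝ) / 2) =
      (√(2 * π * v))⁻¹ ^ Fintype.card ι := by
    rw [Real.sqrt_eq_rpow, ← rpow_neg hvar, ← rpow_mul_natCast hvar]
    ring_nf
  rw [hconst]
  simp only [gaussianPDFReal, Finset.prod_mul_distrib, Finset.prod_const, Finset.card_univ,
    ← exp_sum, EuclideanSpace.real_norm_sq_eq, Finset.sum_div, ← Finset.sum_neg_distrib, neg_div,
    PiLp.sub_apply]

section ProductDensity

variable {ι E : Type*} [Fintype ι] [DecidableEq ι] {p : ι → E → ℝ}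

lemma mul_prod_eq_prod_update (g : E → ℝ) (j : ι) (y : ι → E) :
    g (y j) * ∏ k, p k (y k) = ∏ k, Function.update p j (fun t => g t * p j t) k (y k) := by
  rw [← Finset.mul_prod_erase _ _ (Finset.mem_univ j),
    ← Finset.mul_prod_erase _ _ (Finset.mem_univ j), Function.update_self, mul_assoc]
  congr 2
  exact Finset.prod_congr rfl fun k hk => by rw [Function.update_of_ne (Finset.ne_of_mem_erase hk)]

variable [MeasurableSpace E] {μ : Measure E} [SigmaFinite μ]

lemma integral_comp_eval_mul_prod (hp : ∀ k, ∫ t, p k t ∂μ = 1) (g : E → ℝ) (j : ι) :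
    ∫ y, g (y j) * ∏ k, p k (y k) ∂Measure.pi (fun _ => μ) = ∫ t, g t * p j t ∂μ := by
  simp_rw [mul_prod_eq_prod_update g j]
  rw [integral_fintype_prod_eq_prod, Fintype.prod_eq_single j fun k hk => by
    rw [Function.update_of_ne hk, hp], Function.update_self]

lemma integrable_comp_eval_mul_prod (hp : ∀ k, Integrable (p k) μ) {g : E → ℝ} {j : ι}
    (hg : Integrable (fun t => g t * p j t) μ) :
    Integrable (fun y => g (y j) * ∏ k, p k (y k)) (Measure.pi fun _ => μ) := by
  simp_rw [mul_prod_eq_prod_update g j]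
  refine Integrable.fintype_prod fun k => ?_
  rcases eq_or_ne k j with rfl | hk
  · rwa [Function.update_self]
  · rw [Function.update_of_ne hk]
    exact hp k

lemma integral_sum_comp_eval_mul_prod (hp : ∀ k, Integrable (p k) μ)
    (hp_one : ∀ k, ∫ t, p k t ∂μ = 1) {g : ι → E → ℝ}
    (hg : ∀ j, Integrable (fun t => g j t * p j t) μ) :
    ∫ y, (∑ j, g j (y j)) * ∏ k, p k (y k) ∂Measure.pi (fun _ => μ) =
      ∑ j, ∫ t, g j t * p j t ∂μ := by
  simp_rw [Finset.sum_mul]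
  rw [integral_finsetSum _ fun j _ => integrable_comp_eval_mul_prod hp (hg j)]
  exact Finset.sum_congr rfl fun j _ => integral_comp_eval_mul_prod hp_one (g j) j

end ProductDensity

theorem integral_rastrigin_mul_gaussian_density {ι : Type*} [Fintype ι] (a ξ : ι → ℝ)
    {v : ℝ≥0} (hv : v ≠ 0) (θ : EuclideanSpace ℝ ι) :
    ∫ x : EuclideanSpace ℝ ι, (‖x‖ ^ 2 - ∑ j, a j * cos (ξ j * x j)) *
        ((2 * π * v) ^ (-(Fintype.card ι : ℝ) / 2) * exp (-‖x - θ‖ ^ 2 / (2 * v))) =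
      ∑ j, (θ j ^ 2 + v - a j * exp (-(v * ξ j ^ 2 / 2)) * cos (ξ j * θ j)) := by
  classical
  rw [← (PiLp.volume_preserving_toLp ι).integral_comp
    (MeasurableEquiv.toLp 2 (ι → ℝ)).measurableEmbedding]
  simp_rw [gaussian_density_eq_prod, EuclideanSpace.real_norm_sq_eq, ← Finset.sum_sub_distrib,
    volume_pi]
  rw [integral_sum_comp_eval_mul_prod (g := fun j t => t ^ 2 - a j * cos (ξ j * t))
    (fun k => integrable_gaussianPDFReal _ _)
    (fun k => integral_gaussianPDFReal_eq_one _ hv) fun j => integrable_mul_gaussianPDFReal hv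
      (integrable_sq_gaussianReal.sub ((integrable_cos_const_mul _).const_mul _))]
  refine Finset.sum_congr rfl fun j _ => ?_
  rw [integral_mul_gaussianPDFReal hv, integral_sq_sub_mul_cos_gaussianReal]

lemma strictConvexOn_univ_sum_apply {ι : Type*} [Fintype ι] {φ : ι → ℝ → ℝ}
    (hφ : ∀ j, StrictConvexOn ℝ univ (φ j)) :
    StrictConvexOn ℝ univ fun x : EuclideanSpace ℝ ι => ∑ j, φ j (x j) := by
  refine ⟨convex_univ, fun x _ y _ hxy p q hp hq hpq => ?_⟩
  obtain ⟨j, hj⟩ : ∃ j, x j ≠ y j := by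
    by_contra! h
    exact hxy (PiLp.ext h)
  simp only [PiLp.add_apply, PiLp.smul_apply, smul_eq_mul, Finset.mul_sum,
    ← Finset.sum_add_distrib]
  exact Finset.sum_lt_sum (fun k _ => (hφ k).convexOn.2 trivial trivial hp.le hq.le hpq)
    ⟨j, Finset.mem_univ j, (hφ j).2 trivial trivial hj hp hq hpq⟩

lemma strictConvexOn_sq_sub_mul_cos {c k : ℝ} (h : |c| * k ^ 2 < 2) :
    StrictConvexOn ℝ univ fun t => t ^ 2 - c * cos (k * t) := by
  have hderiv : deriv (fun t => t ^ 2 - c * cos (k * t)) =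
      fun t => 2 * t + c * k * sin (k * t) := by
    ext t
    refine ((hasDerivAt_pow 2 t).sub
      (((hasDerivAt_id t).const_mul k).cos.const_mul c)).deriv.trans ?_
    simp only [id, mul_one]
    ring
  have hderiv2 (t : ℝ) :
      deriv^[2] (fun t => t ^ 2 - c * cos (k * t)) t = 2 + c * k ^ 2 * cos (k * t) := by
    rw [Function.iterate_succ_apply, Function.iterate_one, hderiv]
    refine (((hasDerivAt_id t).const_mul 2).add
      (((hasDerivAt_id t).const_mul k).sin.const_mul (c * k))).deriv.trans ?_
    simp only [id, mul_one]
    ring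
  refine strictConvexOn_univ_of_deriv2_pos (by fun_prop) fun t => ?_
  have hbound : |c * k ^ 2 * cos (k * t)| ≤ |c| * k ^ 2 := by
    rw [abs_mul, abs_mul, abs_of_nonneg (sq_nonneg k)]
    exact mul_le_of_le_one_right (by positivity) (abs_cos_le_one _)
  rw [hderiv2]
  linarith [neg_abs_le (c * k ^ 2 * cos (k * t))]

lemma abs_mul_exp_neg_mul_sq_lt_two {a ξ s : ℝ} (h : 2 / ξ ^ 2 * log (a * ξ ^ 2 / 2) < s) :
    |a * exp (-(s * ξ ^ 2 / 2))| * ξ ^ 2 < 2 := by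
  rcases eq_or_ne ξ 0 with rfl | hξ
  · simp
  rcases eq_or_ne a 0 with rfl | ha
  · simp
  have hξ2 : 0 < ξ ^ 2 := by positivity
  have hlog : log (|a| * ξ ^ 2 / 2) < s * ξ ^ 2 / 2 := by
    rw [show |a| * ξ ^ 2 / 2 = |a * ξ ^ 2 / 2| by rw [abs_div, abs_mul, abs_of_pos hξ2, abs_two],
      log_abs]
    rw [div_mul_eq_mul_div, div_lt_iff₀ hξ2] at h
    linarith
  have hlt := (log_lt_iff_lt_exp (by positivity)).mp hlog
  rw [abs_mul, abs_of_pos (exp_pos _), exp_neg, mul_assoc, mul_comm _ (ξ ^ 2), ← mul_assoc,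
    mul_inv_lt_iff₀ (exp_pos _)]
  linarith

theorem rastrigin_relaxation_strictConvex_general (n : ℕ) (a ξ : Fin n → ℝ)
    (σ : ℝ) (hσ : 0 < σ)
    (hσ' : ∀ j, 2 / ξ j ^ 2 * Real.log (a j * ξ j ^ 2 / 2) < σ ^ 2) :
    StrictConvexOn ℝ Set.univ
      (fun θ : EuclideanSpace ℝ (Fin n) =>
        ∫ x : EuclideanSpace ℝ (Fin n),
          (‖x‖ ^ 2 - ∑ j, a j * Real.cos (ξ j * x j)) *
            ((2 * π * σ ^ 2) ^ (-(n : ℝ) / 2) * Real.exp (-‖x - θ‖ ^ 2 / (2 * σ ^ 2)))) := by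
  have hv : (σ ^ 2).toNNReal ≠ 0 := by positivity
  have hformula := integral_rastrigin_mul_gaussian_density a ξ hv
  simp only [Real.coe_toNNReal _ (sq_nonneg σ), Fintype.card_fin] at hformula
  simp_rw [hformula]
  refine strictConvexOn_univ_sum_apply
    (φ := fun j t => t ^ 2 + σ ^ 2 - a j * exp (-(σ ^ 2 * ξ j ^ 2 / 2)) * cos (ξ j * t))
    fun j => ?_
  refine ((strictConvexOn_sq_sub_mul_cos (abs_mul_exp_neg_mul_sq_lt_two (hσ' j))).add_const
    (σ ^ 2)).congr fun t _ => ?_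
  simp only [Pi.add_apply]
  ring

/-- If `σ² > (2/ξ_j²)·log(a_j ξ_j²/2)` for every `j`, then the Gaussian
relaxation `θ ↦ ∫ f dN(θ, σ²I)` of the Rastrigin function is strictly convex. -/
theorem rastrigin_relaxation_strictConvex (n : ℕ) (a ξ : Fin n → ℝ)
    (ha : ∀ j, 0 < a j) (hξ : ∀ j, 0 < ξ j)
    (σ : ℝ) (hσ : 0 < σ)
    (hσ' : ∀ j, 2 / ξ j ^ 2 * Real.log (a j * ξ j ^ 2 / 2) < σ ^ 2) :
    StrictConvexOn ℝ Set.univ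
      (fun θ : EuclideanSpace ℝ (Fin n) =>
        ∫ x : EuclideanSpace ℝ (Fin n),
          (‖x‖ ^ 2 - ∑ j, a j * Real.cos (ξ j * x j)) *
            ((2 * π * σ ^ 2) ^ (-(n : ℝ) / 2) * Real.exp (-‖x - θ‖ ^ 2 / (2 * σ ^ 2)))) :=
  rastrigin_relaxation_strictConvex_general n a ξ σ hσ hσ'
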